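/- Let (M, Σ_M, μ_M) be a measure space, (N, d_N) a complete metric space, h : M → N strongly measurable, and p ∈ [1,∞). Let L^p([a,b],N) be the metric space of Lebesgue-a.e.-equality classes of strongly measurable curves γ : [a,b] → N with ∫_a^b d_N(γ(t), y₀)^p dt < ∞ (for some, equivalently any, y₀ ∈ N), with metric d_p(γ,γ') := (∫_a^b d_N(γ(t), γ'(t))^p dt)^{1/p}, and let \underline{h} : M → L^p([a,b],N) send x to the class of the constant curve t ↦ h(x). Suppose f : M → L^p([a,b],N) is Borel measurable with separable range and ∫_M d_p(f(x), \underline{h}(x))^p dμ_M < ∞. Then there exists a Borel measurable ĉ : [a,b]×M → N with separable range such that ∫ d_N(ĉ(t,x), h(x))^p d(λ⊗μ_M) < ∞ and, for μ_M-a.e. x ∈ M, the curve t ↦ ĉ(t,x) is a representative of the class f(x). -/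

import Mathlib

/-!
Choose a countable dense sequence `g` in the range of `f` and, for each `k`, select measurably in
`x` an index `n_k x` with `d_p(f x, g (n_k x)) < 2⁻ᵏ`. The maps `(t, x) ↦ g (n_k x) t` are jointly
measurable because only countably many curves occur, and since `∑ₖ 2^{-kp} < ∞` they converge,
for every `x` and a.e. `t`, to `f x t`; their pointwise limit is strongly measurable. Replacing it
by `h x` on the fibres where `d_p(f x, h x) = 0` confines the integrand to a set on which `μ` is
σ-finite (the `p`-th power of that distance is integrable), and there Tonelli bounds the product
integral by `∫ d_p(f x, h x)^p dμ`.
-/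

set_option linter.unusedSectionVars false

open MeasureTheory ENNReal Set Filter Topology TopologicalSpace

noncomputable section

namespace NLS

variable {α : Type*} [MeasurableSpace α] {N : Type*} [MetricSpace N]
  [MeasurableSpace N] [BorelSpace N]

/-- "Strongly measurable": Borel measurable with separable range. -/
def SM (f : α → N) : Prop :=
  Measurable f ∧ TopologicalSpace.IsSeparable (Set.range f)

theorem SM.aesm {f : α → N} (hf : SM f) (μ : Measure α) :
    AEStronglyMeasurable f μ :=
  (stronglyMeasurable_iff_measurable_separable.2 ⟨hf.1, hf.2⟩).aestronglyMeasurable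

/-- The `L^p` (extended) distance between two maps with values in a metric space;
for `p < ∞` it is `(∫ d(f x, g x)^p dμ)^{1/p}` and for `p = ∞` the essential supremum
of `x ↦ d(f x, g x)`. -/
def Dp (μ : Measure α) (p : ℝ≥0∞) (f g : α → N) : ℝ≥0∞ :=
  eLpNorm (fun x => dist (f x) (g x)) p μ

theorem Dp_self (μ : Measure α) (p : ℝ≥0∞) (f : α → N) : Dp μ p f f = 0 := by
  unfold Dp
  simp only [dist_self]
  exact eLpNorm_zero'

theorem Dp_comm (μ : Measure α) (p : ℝ≥0∞) (f g : α → N) : Dp μ p f g = Dp μ p g f := by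
  unfold Dp
  simp only [dist_comm]

theorem Dp_triangle {μ : Measure α} {p : ℝ≥0∞} (hp : 1 ≤ p) {f g k : α → N}
    (hf : AEStronglyMeasurable f μ) (hg : AEStronglyMeasurable g μ)
    (hk : AEStronglyMeasurable k μ) :
    Dp μ p f k ≤ Dp μ p f g + Dp μ p g k := by
  have h1 : Dp μ p f k ≤
      eLpNorm ((fun x => dist (f x) (g x)) + fun x => dist (g x) (k x)) p μ := by
    refine eLpNorm_mono fun x => ?_
    simp only [Pi.add_apply, Real.norm_eq_abs]
    rw [abs_of_nonneg dist_nonneg]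
    exact (dist_triangle (f x) (g x) (k x)).trans (le_abs_self _)
  exact h1.trans (eLpNorm_add_le (hf.dist hg) (hg.dist hk) hp)

/-- The nonlinear Lebesgue space `L^p_h(α, N)` with base map `h`, presented by
representatives: Borel measurable, separably valued maps at finite `D_p`-distance
from `h`.  Two representatives at `D_p`-distance `0` (equivalently, `μ`-a.e. equal)
represent the same element of the quotient nonlinear Lebesgue space; accordingly the
canonical structure below is a pseudometric space whose metric (separation) quotient is
the actual nonlinear Lebesgue space.  All topological and Borel-measurability notions for
the quotient correspond exactly to those of this pseudometric space. -/
def NLp (μ : Measure α) (h : α → N) (_hh : SM h) (p : ℝ≥0∞) : Type _ :=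
  {f : α → N // SM f ∧ Dp μ p f h ≠ ∞}

namespace NLp

variable {μ : Measure α} {h : α → N} {hh : SM h} {p : ℝ≥0∞}

def pem (μ : Measure α) (h : α → N) (hh : SM h) (p : ℝ≥0∞) (hp : 1 ≤ p) :
    PseudoEMetricSpace (NLp μ h hh p) where
  edist f g := Dp μ p f.1 g.1
  edist_self f := Dp_self μ p f.1
  edist_comm f g := Dp_comm μ p f.1 g.1
  edist_triangle f g k := Dp_triangle hp (f.2.1.aesm μ) (g.2.1.aesm μ) (k.2.1.aesm μ)

theorem dp_ne_top (hp : 1 ≤ p) (f g : NLp μ h hh p) : Dp μ p f.1 g.1 ≠ ∞ := by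
  have htri := Dp_triangle hp (f.2.1.aesm μ) (hh.aesm μ) (g.2.1.aesm μ)
  have h2 : Dp μ p h g.1 ≠ ∞ := by rw [Dp_comm]; exact g.2.2
  exact ne_top_of_le_ne_top (ENNReal.add_ne_top.2 ⟨f.2.2, h2⟩) htri

/-- The `D_p` pseudometric on the nonlinear Lebesgue space. -/
instance [hp : Fact (1 ≤ p)] : PseudoMetricSpace (NLp μ h hh p) :=
  @PseudoEMetricSpace.toPseudoMetricSpace _ (pem μ h hh p hp.out)
    (fun f g => dp_ne_top hp.out f g)

instance [Fact (1 ≤ p)] : MeasurableSpace (NLp μ h hh p) := borel _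
instance [Fact (1 ≤ p)] : BorelSpace (NLp μ h hh p) := ⟨rfl⟩

theorem edist_def [Fact (1 ≤ p)] (f g : NLp μ h hh p) :
    edist f g = Dp μ p f.1 g.1 := rfl

theorem dist_def [Fact (1 ≤ p)] (f g : NLp μ h hh p) :
    dist f g = (Dp μ p f.1 g.1).toReal := rfl

end NLp

/-- Absolutely continuous curves: `c ∈ AC^p([a,b], X)`. -/
def MemACp {X : Type*} [PseudoMetricSpace X] (p : ℝ≥0∞) (a b : ℝ) (c : ℝ → X) : Prop :=
  ∃ m : ℝ → ℝ, MemLp m p (volume.restrict (Set.Icc a b)) ∧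
    ∀ s t : ℝ, a ≤ s → s ≤ t → t ≤ b → dist (c s) (c t) ≤ ∫ r in s..t, m r

/-- The metric derivative of a curve at `t` (limit of difference quotients within `[a,b]`). -/
def mder {X : Type*} [PseudoMetricSpace X] (a b : ℝ) (c : ℝ → X) (t : ℝ) : ℝ :=
  limUnder (𝓝[Set.Icc a b \ {t}] t) fun s => dist (c s) (c t) / |s - t|

/-- The space `L^p(ν, N)` of `p`-integrable maps into a metric space, presented by
representatives (Borel measurable, separably valued, at finite `D_p`-distance from some,
equivalently — for finite `ν` — any, constant map); as for `NLp`, the canonical structure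
is a pseudometric space whose metric quotient is the actual space of classes. -/
def LpB {β : Type*} [MeasurableSpace β] (ν : Measure β) (N : Type*) [MetricSpace N]
    [MeasurableSpace N] [BorelSpace N] (p : ℝ≥0∞) : Type _ :=
  {γ : β → N // SM γ ∧ ∃ y₀ : N, Dp ν p γ (fun _ => y₀) ≠ ∞}

namespace LpB

variable {β : Type*} [MeasurableSpace β] {ν : Measure β} {p : ℝ≥0∞}

def pem (ν : Measure β) (N : Type*) [MetricSpace N] [MeasurableSpace N] [BorelSpace N]
    (p : ℝ≥0∞) (hp : 1 ≤ p) : PseudoEMetricSpace (LpB ν N p) where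
  edist f g := Dp ν p f.1 g.1
  edist_self f := Dp_self ν p f.1
  edist_comm f g := Dp_comm ν p f.1 g.1
  edist_triangle f g k := Dp_triangle hp (f.2.1.aesm ν) (g.2.1.aesm ν) (k.2.1.aesm ν)

instance [hp : Fact (1 ≤ p)] : PseudoEMetricSpace (LpB ν N p) := pem ν N p hp.out
instance [Fact (1 ≤ p)] : MeasurableSpace (LpB ν N p) := borel _
instance [Fact (1 ≤ p)] : BorelSpace (LpB ν N p) := ⟨rfl⟩

theorem edist_def [Fact (1 ≤ p)] (f g : LpB ν N p) :
    edist f g = Dp ν p f.1 g.1 := rfl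

end LpB


theorem sm_iff_stronglyMeasurable {f : α → N} : SM f ↔ StronglyMeasurable f :=
  stronglyMeasurable_iff_measurable_separable.symm

section Dp

variable {β : Type*} [MeasurableSpace β] {ν : Measure β} {E : Type*} [MetricSpace E]

theorem Dp_ofReal_rpow_eq_lintegral {p : ℝ} (hp : 0 < p) (u v : β → E) :
    Dp ν (ENNReal.ofReal p) u v ^ p = ∫⁻ t, edist (u t) (v t) ^ p ∂ν := by
  rw [Dp, eLpNorm_eq_lintegral_rpow_enorm_toReal (by simpa using hp) ofReal_ne_top,
    toReal_ofReal hp.le, ← rpow_mul, one_div, inv_mul_cancel₀ hp.ne', rpow_one]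
  simp_rw [edist_dist, Real.enorm_eq_ofReal dist_nonneg]

theorem Dp_const_const {p : ℝ≥0∞} (hp0 : p ≠ 0) (hp : p ≠ ∞) (y y' : E) :
    Dp ν p (fun _ => y) (fun _ => y') = edist y y' * ν univ ^ (1 / p.toReal) := by
  rw [Dp, eLpNorm_const' _ hp0 hp, edist_dist, Real.enorm_eq_ofReal dist_nonneg]

theorem Dp_congr_ae_left {p : ℝ≥0∞} {u u' v : β → E} (h : u =ᵐ[ν] u') :
    Dp ν p u v = Dp ν p u' v :=
  eLpNorm_congr_ae (h.mono fun t ht => by simp only [ht])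

theorem ae_eq_of_Dp_eq_zero {p : ℝ≥0∞} (hp : p ≠ 0) {u v : β → E}
    (hu : AEStronglyMeasurable u ν) (hv : AEStronglyMeasurable v ν) (h : Dp ν p u v = 0) :
    u =ᵐ[ν] v :=
  ((eLpNorm_eq_zero_iff (hu.dist hv) hp).1 h).mono fun _ ht => dist_eq_zero.1 ht

theorem ae_tendsto_of_tsum_Dp_rpow_ne_top {p : ℝ} (hp : 0 < p) {u : ℕ → β → E} {v : β → E}
    (hu : ∀ k, AEStronglyMeasurable (u k) ν) (hv : AEStronglyMeasurable v ν)
    (h : ∑' k, Dp ν (ENNReal.ofReal p) (u k) v ^ p ≠ ∞) :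
    ∀ᵐ t ∂ν, Tendsto (fun k => u k t) atTop (𝓝 (v t)) := by
  have hmeas : ∀ k, AEMeasurable (fun t => edist (u k t) (v t) ^ p) ν := fun k =>
    ((hu k).edist hv).pow_const p
  simp_rw [Dp_ofReal_rpow_eq_lintegral hp, ← lintegral_tsum hmeas] at h
  filter_upwards [ae_lt_top' (AEMeasurable.tsum hmeas) h] with t ht
  have hpow : Tendsto (fun k => edist (u k t) (v t) ^ p) atTop (𝓝 0) :=
    ENNReal.tendsto_atTop_zero_of_tsum_ne_top ht.ne
  have hroot := (ENNReal.continuous_rpow_const (y := p⁻¹)).tendsto 0 |>.comp hpow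
  simp only [Function.comp_def, ← rpow_mul, mul_inv_cancel₀ hp.ne', rpow_one,
    zero_rpow_of_pos (inv_pos.2 hp)] at hroot
  exact tendsto_iff_edist_tendsto_0.2 hroot

end Dp

theorem sigmaFinite_restrict_support_of_lintegral_ne_top {μ : Measure α} {φ : α → ℝ≥0∞}
    (hφ : Measurable φ) (h : ∫⁻ x, φ x ∂μ ≠ ∞) : SigmaFinite (μ.restrict φ.support) := by
  have hsupp : MeasurableSet φ.support := measurableSet_support hφ
  refine Measure.sigmaFinite_of_countable (S := insert φ.supportᶜ
      (range fun n : ℕ => {x | ((n : ℝ≥0∞) + 1)⁻¹ ≤ φ x})) ((countable_range _).insert _) ?_ ?_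
  · rintro _ (rfl | ⟨n, rfl⟩)
    · simp [Measure.restrict_apply hsupp.compl]
    · calc _ ≤ μ {x | ((n : ℝ≥0∞) + 1)⁻¹ ≤ φ x} := Measure.restrict_le_self _
        _ ≤ (∫⁻ x, φ x ∂μ) / ((n : ℝ≥0∞) + 1)⁻¹ :=
          meas_ge_le_lintegral_div hφ.aemeasurable (by simp) (by simp)
        _ < ∞ := div_lt_top h (by simp)
  · refine eq_univ_of_forall fun x => ?_
    by_cases hx : φ x = 0
    · exact mem_sUnion_of_mem (by simpa using hx) (mem_insert _ _)
    · obtain ⟨n, hn⟩ := exists_inv_nat_lt hx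
      exact mem_sUnion_of_mem (show ((n : ℝ≥0∞) + 1)⁻¹ ≤ φ x from
        (ENNReal.inv_le_inv.2 le_self_add).trans hn.le) (mem_insert_of_mem _ ⟨n, rfl⟩)

theorem lintegral_prod_le_setLIntegral_of_eq_zero_off {β γ : Type*} [MeasurableSpace β]
    [MeasurableSpace γ] {ν : Measure β} [SFinite ν] {μ : Measure γ} {s : Set γ}
    [SFinite (μ.restrict s)] {G : β × γ → ℝ≥0∞} (hG : Measurable G)
    (hGs : ∀ t, ∀ x ∉ s, G (t, x) = 0) :
    ∫⁻ q, G q ∂ν.prod μ ≤ ∫⁻ x in s, ∫⁻ t, G (t, x) ∂ν ∂μ :=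
  calc ∫⁻ q, G q ∂ν.prod μ ≤ ∫⁻ t, ∫⁻ x, G (t, x) ∂μ ∂ν := lintegral_prod_le G
    _ = ∫⁻ t, ∫⁻ x in s, G (t, x) ∂μ ∂ν := by
        refine lintegral_congr fun t => (setLIntegral_eq_of_support_subset fun x hx => ?_).symm
        by_contra hxs
        exact hx (hGs t x hxs)
    _ = ∫⁻ x in s, ∫⁻ t, G (t, x) ∂ν ∂μ := lintegral_lintegral_swap hG.aemeasurable

theorem exists_measurable_index_edist_lt {X : Type*} [PseudoEMetricSpace X] [MeasurableSpace X]
    [OpensMeasurableSpace X] {f : α → X} (hf : Measurable f) {g : ℕ → X}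
    (hg : range f ⊆ closure (range g)) {ε : ℝ≥0∞} (hε : 0 < ε) :
    ∃ n : α → ℕ, Measurable n ∧ ∀ x, edist (f x) (g (n x)) < ε := by
  classical
  have hex : ∀ x, ∃ n, edist (f x) (g n) < ε := fun x => by
    obtain ⟨_, ⟨n, rfl⟩, hn⟩ := EMetric.mem_closure_iff.1 (hg ⟨x, rfl⟩) ε hε
    exact ⟨n, hn⟩
  exact ⟨fun x => Nat.find (hex x), measurable_find hex fun n =>
    (continuous_id.edist continuous_const).measurable.comp hf measurableSet_Iio,
    fun x => Nat.find_spec (hex x)⟩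

theorem _root_.TopologicalSpace.IsSeparable.exists_subset_closure_range {X : Type*}
    [TopologicalSpace X] {s : Set X} (hs : IsSeparable s) (hne : s.Nonempty) :
    ∃ g : ℕ → X, s ⊆ closure (range g) := by
  obtain ⟨t, htc, hst⟩ := hs
  obtain ⟨g, rfl⟩ := htc.exists_eq_range (closure_nonempty_iff.1 (hne.mono hst))
  exact ⟨g, hst⟩

namespace LpB

variable {β : Type*} [MeasurableSpace β] {ν : Measure β} {p : ℝ≥0∞}

def const (y : N) : LpB ν N p :=
  ⟨fun _ => y, ⟨measurable_const, (countable_singleton y).isSeparable.mono range_const_subset⟩,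
    y, by rw [Dp_self]; exact zero_ne_top⟩

theorem lipschitzWith_const [IsFiniteMeasure ν] [hp : Fact (1 ≤ p)] (hp_top : p ≠ ∞) :
    LipschitzWith (ν univ ^ (1 / p.toReal)).toNNReal (const : N → LpB ν N p) := fun y y' => by
  rw [edist_def, const, const, Dp_const_const (one_pos.trans_le hp.out).ne' hp_top,
    coe_toNNReal (rpow_ne_top_of_nonneg (by positivity) (measure_ne_top ν _)), mul_comm]

theorem stronglyMeasurable [Fact (1 ≤ p)] {f : α → LpB ν N p} (hfm : Measurable f)
    (hfs : IsSeparable (range f)) : StronglyMeasurable f :=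
  stronglyMeasurable_iff_measurable_separable.2 ⟨hfm, hfs⟩

end LpB

theorem stronglyMeasurable_uncurry_of_countable {β ι : Type*} [MeasurableSpace β]
    [MeasurableSpace ι] [Countable ι] [MeasurableSingletonClass ι]
    {g : ι → β → N} (hg : ∀ i, SM (g i)) :
    StronglyMeasurable fun q : β × ι => g q.2 q.1 :=
  sm_iff_stronglyMeasurable.1 ⟨measurable_from_prod_countable_left fun i => (hg i).1,
    (isSeparable_iUnion.2 fun i => (hg i).2).mono
      (range_subset_iff.2 fun q => mem_iUnion.2 ⟨q.2, q.1, rfl⟩)⟩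

theorem exists_stronglyMeasurable_uncurry_ae_eq [Nonempty α] [Nonempty N] [CompleteSpace N]
    {β : Type*} [MeasurableSpace β] {ν : Measure β} {p : ℝ} [hp : Fact (1 ≤ ENNReal.ofReal p)]
    {f : α → LpB ν N (ENNReal.ofReal p)} (hfm : Measurable f) (hfs : IsSeparable (range f)) :
    ∃ c : β × α → N, StronglyMeasurable c ∧ ∀ x, (fun t => c (t, x)) =ᵐ[ν] (f x).1 := by
  have hp1 : 1 ≤ p := ENNReal.one_le_ofReal.1 hp.out
  have hp0 : 0 < p := one_pos.trans_le hp1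
  obtain ⟨g, hg⟩ := hfs.exists_subset_closure_range (range_nonempty f)
  choose n hn hfg using fun k : ℕ =>
    exists_measurable_index_edist_lt hfm hg (ε := 2⁻¹ ^ k) (ENNReal.pow_pos (by norm_num) k)
  set c : ℕ → β × α → N := fun k q => (g (n k q.2)).1 q.1
  have hc : ∀ k, StronglyMeasurable (c k) := fun k =>
    (stronglyMeasurable_uncurry_of_countable fun i => (g i).2.1).comp_measurable
      (measurable_fst.prodMk ((hn k).comp measurable_snd))
  have hDp : ∀ k x, Dp ν (ENNReal.ofReal p) (g (n k x)).1 (f x).1 ^ p ≤ 2⁻¹ ^ k := fun k x =>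
    calc Dp ν (ENNReal.ofReal p) (g (n k x)).1 (f x).1 ^ p = edist (f x) (g (n k x)) ^ p := by
          rw [LpB.edist_def, Dp_comm]
      _ ≤ (2⁻¹ ^ k) ^ p := rpow_le_rpow (hfg k x).le hp0.le
      _ ≤ (2⁻¹ ^ k) ^ (1 : ℝ) := rpow_le_rpow_of_exponent_ge (pow_le_one' (by norm_num) k) hp1
      _ = 2⁻¹ ^ k := rpow_one _
  have hlim : ∀ x, ∀ᵐ t ∂ν, Tendsto (fun k => c k (t, x)) atTop (𝓝 ((f x).1 t)) := fun x =>
    ae_tendsto_of_tsum_Dp_rpow_ne_top hp0 (fun k => (g (n k x)).2.1.aesm ν) ((f x).2.1.aesm ν)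
      (ne_top_of_le_ne_top (by simp [ENNReal.tsum_geometric]) (ENNReal.tsum_le_tsum (hDp · x)))
  refine ⟨fun q => limUnder atTop fun k => c k q, StronglyMeasurable.limUnder hc, fun x => ?_⟩
  filter_upwards [hlim x] with t ht using ht.limUnder_eq

theorem measurable_Dp_const {β : Type*} [MeasurableSpace β] {ν : Measure β} [IsFiniteMeasure ν]
    {p : ℝ≥0∞} [Fact (1 ≤ p)] (hp : p ≠ ∞) {f : α → LpB ν N p} (hfm : Measurable f)
    (hfs : IsSeparable (range f)) {h : α → N} (hh : SM h) :
    Measurable fun x => Dp ν p (f x).1 (fun _ => h x) :=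
  ((LpB.stronglyMeasurable hfm hfs).edist
    ((LpB.lipschitzWith_const hp).continuous.comp_stronglyMeasurable
      (sm_iff_stronglyMeasurable.1 hh))).measurable

theorem exists_measurable_representative_of_lintegral_Dp_rpow_lt_top [CompleteSpace N]
    {β : Type*} [MeasurableSpace β] {ν : Measure β} [IsFiniteMeasure ν] (μ : Measure α)
    {h : α → N} (hh : SM h) {p : ℝ} [hp : Fact (1 ≤ ENNReal.ofReal p)]
    {f : α → LpB ν N (ENNReal.ofReal p)} (hfm : Measurable f) (hfs : IsSeparable (range f))
    (hff : ∫⁻ x, Dp ν (ENNReal.ofReal p) (f x).1 (fun _ => h x) ^ p ∂μ < ∞) :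
    ∃ cHat : β × α → N, Measurable cHat ∧ IsSeparable (range cHat) ∧
      (∫⁻ q, edist (cHat q) (h q.2) ^ p ∂(ν.prod μ) < ∞) ∧
      ∀ᵐ x ∂μ, (fun t => cHat (t, x)) =ᵐ[ν] (f x).1 := by
  classical
  have hp0 : 0 < p := one_pos.trans_le (ENNReal.one_le_ofReal.1 hp.out)
  have hh' : StronglyMeasurable fun q : β × α => h q.2 :=
    (sm_iff_stronglyMeasurable.1 hh).comp_measurable measurable_snd
  rcases isEmpty_or_nonempty α with hα | hα
  · exact ⟨fun q => h q.2, hh'.measurable, hh'.isSeparable_range,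
      by simp [zero_rpow_of_pos hp0], ae_of_all _ isEmptyElim⟩
  have : Nonempty N := ⟨h hα.some⟩
  obtain ⟨c, hc, hcf⟩ := exists_stronglyMeasurable_uncurry_ae_eq hfm hfs
  set φ : α → ℝ≥0∞ := fun x => Dp ν (ENNReal.ofReal p) (f x).1 (fun _ => h x) ^ p
  have hφ : Measurable φ := (measurable_Dp_const ofReal_ne_top hfm hfs hh).pow_const p
  have : SigmaFinite (μ.restrict φ.support) :=
    sigmaFinite_restrict_support_of_lintegral_ne_top hφ hff.ne
  set cHat : β × α → N := fun q => if q.2 ∈ φ.support then c q else h q.2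
  have hcHat : StronglyMeasurable cHat :=
    hc.ite (measurable_snd (measurableSet_support hφ)) hh'
  have hrep : ∀ x, (fun t => cHat (t, x)) =ᵐ[ν] (f x).1 := by
    intro x
    by_cases hx : x ∈ φ.support
    · simpa only [cHat, if_pos hx] using hcf x
    · have hDp : Dp ν (ENNReal.ofReal p) (fun _ => h x) (f x).1 = 0 := by
        simpa [φ, Dp_comm, rpow_eq_zero_iff, hp0, not_lt_of_gt hp0] using hx
      simpa only [cHat, if_neg hx] using
        ae_eq_of_Dp_eq_zero (by simpa using hp0) aestronglyMeasurable_const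
          ((f x).2.1.aesm ν) hDp
  refine ⟨cHat, hcHat.measurable, hcHat.isSeparable_range, ?_, ae_of_all _ hrep⟩
  calc ∫⁻ q, edist (cHat q) (h q.2) ^ p ∂(ν.prod μ)
      ≤ ∫⁻ x in φ.support, ∫⁻ t, edist (cHat (t, x)) (h x) ^ p ∂ν ∂μ :=
        lintegral_prod_le_setLIntegral_of_eq_zero_off
          ((hcHat.edist hh').measurable.pow_const p)
          fun t x hx => by simp only [cHat, if_neg hx, edist_self, zero_rpow_of_pos hp0]
    _ = ∫⁻ x in φ.support, φ x ∂μ := lintegral_congr fun x => by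
        rw [← Dp_ofReal_rpow_eq_lintegral hp0, Dp_congr_ae_left (hrep x)]
    _ ≤ ∫⁻ x, φ x ∂μ := setLIntegral_le_lintegral _ _
    _ < ∞ := hff

theorem stmt7_general {α : Type*} [MeasurableSpace α] {N : Type*} [MetricSpace N]
    [MeasurableSpace N] [BorelSpace N] [CompleteSpace N]
    (μ : Measure α) (h : α → N) (hh : SM h)
    (p a b : ℝ) [Fact (1 ≤ ENNReal.ofReal p)]
    (f : α → LpB (volume.restrict (Set.Icc a b)) N (ENNReal.ofReal p))
    (hfm : Measurable f) (hfs : TopologicalSpace.IsSeparable (Set.range f))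
    (hff : ∫⁻ x, Dp (volume.restrict (Set.Icc a b)) (ENNReal.ofReal p)
        (f x).1 (fun _ => h x) ^ p ∂μ < ∞) :
    ∃ cHat : ℝ × α → N, Measurable cHat ∧ TopologicalSpace.IsSeparable (Set.range cHat) ∧
      (∫⁻ q, edist (cHat q) (h q.2) ^ p ∂((volume.restrict (Set.Icc a b)).prod μ) < ∞) ∧
      ∀ᵐ x ∂μ, (fun t => cHat (t, x)) =ᵐ[volume.restrict (Set.Icc a b)] (f x).1 :=
  exists_measurable_representative_of_lintegral_Dp_rpow_lt_top μ hh hfm hfs hff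

/-- If `f : M → L^p([a,b],N)` (`N` complete) is Borel measurable with separable range and
`∫_M d_p(f(x), underline‑h(x))^p dμ < ∞` (where `underline‑h(x)` is the class of the
constant curve `t ↦ h x`), then there is a jointly Borel measurable, separably valued
`cHat : [a,b] × M → N` with `∫ d(cHat(t,x), h(x))^p d(λ⊗μ) < ∞` such that for `μ`-a.e.
`x ∈ M`, the curve `t ↦ cHat(t,x)` is a representative of the class `f x`. -/
theorem stmt7 {α : Type*} [MeasurableSpace α] {N : Type*} [MetricSpace N]
    [MeasurableSpace N] [BorelSpace N] [CompleteSpace N]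
    (μ : Measure α) (h : α → N) (hh : SM h)
    (p a b : ℝ) (hp : 1 ≤ p) (hab : a < b) [Fact (1 ≤ ENNReal.ofReal p)]
    (f : α → LpB (volume.restrict (Set.Icc a b)) N (ENNReal.ofReal p))
    (hfm : Measurable f) (hfs : TopologicalSpace.IsSeparable (Set.range f))
    (hff : ∫⁻ x, Dp (volume.restrict (Set.Icc a b)) (ENNReal.ofReal p)
        (f x).1 (fun _ => h x) ^ p ∂μ < ∞) :
    ∃ cHat : ℝ × α → N, Measurable cHat ∧ TopologicalSpace.IsSeparable (Set.range cHat) ∧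
      (∫⁻ q, edist (cHat q) (h q.2) ^ p ∂((volume.restrict (Set.Icc a b)).prod μ) < ∞) ∧
      ∀ᵐ x ∂μ, (fun t => cHat (t, x)) =ᵐ[volume.restrict (Set.Icc a b)] (f x).1 :=
  stmt7_general μ h hh p a b f hfm hfs hff

end NLS
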